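/- Let A(x) = Ai(−x) and for d ∈ ℕ set A_d = {α_ℓ, β_ℓ : ℓ = 0,…,d} where α_ℓ(z) = z^ℓ A(z), β_ℓ(z) = z^ℓ A'(z). Then the operator u ↦ −u'' − z·u is a linear bijection from span(A_d \ {α₀}) onto span(A_d \ {β_d}). -/

import Mathlib

/-!
With `L u = -u'' - z u` and `A'' = -z A` one computes
`L (z^ℓ A) = -ℓ(ℓ-1) z^(ℓ-2) A - 2ℓ z^(ℓ-1) A'` and
`L (z^ℓ A') = (2ℓ+1) z^ℓ A - ℓ(ℓ-1) z^(ℓ-2) A'`.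
So `L` maps the first span into the second, and reading the two formulas as triangular
recurrences recovers `α_ℓ` from `L β_ℓ` and `β_ℓ` from `L α_(ℓ+1)` by induction on `ℓ`, so `L`
is onto. Both spans are spanned by `2d + 1` functions and the target ones are independent, so
the surjection is also injective by counting dimensions.
-/

open Set Submodule Module

theorem LinearMap.bijOn_of_map_eq_of_finrank_le {K M N : Type*} [DivisionRing K]
    [AddCommGroup M] [Module K M] [AddCommGroup N] [Module K N] (f : M →ₗ[K] N)
    {V : Submodule K M} {W : Submodule K N} [FiniteDimensional K V]
    (hmap : V.map f = W) (hdim : finrank K V ≤ finrank K W) : BijOn f V W := by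
  have hker : LinearMap.ker (f.domRestrict V) = ⊥ := by
    have := (f.domRestrict V).finrank_range_add_finrank_ker
    rw [LinearMap.range_domRestrict, hmap] at this
    exact Submodule.finrank_eq_zero.mp (by omega)
  refine ⟨fun x hx => hmap ▸ mem_map_of_mem hx, fun x hx y hy hxy => ?_, fun y hy => ?_⟩
  · exact congrArg Subtype.val
      (LinearMap.ker_eq_bot.mp hker (a₁ := ⟨x, hx⟩) (a₂ := ⟨y, hy⟩) hxy)
  · rw [← hmap] at hy
    exact hy

theorem Submodule.smul_mem_of_ne_zero_imp {R M : Type*} [Semiring R] [AddCommMonoid M]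
    [Module R M] (p : Submodule R M) {c : R} {x : M} (h : c ≠ 0 → x ∈ p) : c • x ∈ p := by
  rcases eq_or_ne c 0 with hc | hc
  · simp [hc]
  · exact p.smul_mem c (h hc)

theorem Submodule.map_subtype_span_preimage {R M : Type*} [Semiring R] [AddCommMonoid M]
    [Module R M] (p : Submodule R M) {s : Set M} (hs : s ⊆ p) :
    (span R (p.subtype ⁻¹' s)).map p.subtype = span R s := by
  rw [map_span, image_preimage_eq_of_subset (by simpa using hs)]

section Finrank

variable {K M : Type*} [DivisionRing K] [AddCommGroup M] [Module K M]

theorem finrank_span_image_Icc_union_image_Icc_le (f g : ℕ → M) (d : ℕ) :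
    finrank K (span K (f '' Icc 1 d ∪ g '' Icc 0 d)) ≤ 2 * d + 1 := by
  classical
  have hfin : f '' Icc 1 d ∪ g '' Icc 0 d
      = ↑((Finset.Icc 1 d).image f ∪ (Finset.Icc 0 d).image g) := by
    simp only [Finset.coe_union, Finset.coe_image, Finset.coe_Icc]
  rw [hfin]
  refine (finrank_span_finset_le_card _).trans ((Finset.card_union_le _ _).trans ?_)
  have h1 := (Finset.Icc 1 d).card_image_le (f := f)
  have h2 := (Finset.Icc 0 d).card_image_le (f := g)
  simp only [Nat.card_Icc] at h1 h2
  omega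

theorem finrank_span_image_Icc_union_image_Iio (f g : ℕ → M) (d : ℕ)
    (hfg : LinearIndependent K
      (Sum.elim (fun i : Fin (d + 1) => f i) (fun i : Fin (d + 1) => g i))) :
    finrank K (span K (f '' Icc 0 d ∪ g '' Iio d)) = 2 * d + 1 := by
  have hsub := hfg.comp (Sum.map id Fin.castSucc)
    (Function.injective_id.sumMap (Fin.castSucc_injective d))
  have hrange : range ((Sum.elim (fun i : Fin (d + 1) => f i) (fun i : Fin (d + 1) => g i))
      ∘ Sum.map id Fin.castSucc) = f '' Icc 0 d ∪ g '' Iio d := by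
    ext x
    simp [Sum.elim_comp_map, Fin.exists_iff]
  rw [← hrange, finrank_span_eq_card hsub]
  simp
  omega

end Finrank

theorem two_le_of_mul_sub_one_ne_zero {ℓ : ℕ} (h : (ℓ : ℝ) * (ℓ - 1) ≠ 0) : 2 ≤ ℓ := by
  by_contra! hℓ
  interval_cases ℓ <;> simp at h

section TwiceDifferentiable

variable {𝕜 F : Type*} [NontriviallyNormedField 𝕜] [NormedAddCommGroup F] [NormedSpace 𝕜 F]

theorem deriv_add_of_differentiable {f g : 𝕜 → F} (hf : Differentiable 𝕜 f)
    (hg : Differentiable 𝕜 g) : deriv (f + g) = deriv f + deriv g :=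
  funext fun z => deriv_add (hf z) (hg z)

theorem deriv_const_smul_of_differentiable (c : 𝕜) {f : 𝕜 → F} (hf : Differentiable 𝕜 f) :
    deriv (c • f) = c • deriv f :=
  funext fun z => deriv_const_smul c (hf z)

variable (𝕜 F) in
/-- `deriv` is additive only on differentiable functions, so `u ↦ u''` is linear only here. -/
def twiceDifferentiable : Submodule 𝕜 (𝕜 → F) where
  carrier := {f | Differentiable 𝕜 f ∧ Differentiable 𝕜 (deriv f)}
  add_mem' hf hg := ⟨hf.1.add hg.1, by
    rw [deriv_add_of_differentiable hf.1 hg.1]; exact hf.2.add hg.2⟩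
  zero_mem' := by simp
  smul_mem' c _ hf := ⟨hf.1.const_smul c, by
    rw [deriv_const_smul_of_differentiable c hf.1]; exact hf.2.const_smul c⟩

variable (𝕜 F) in
noncomputable def secondDeriv : twiceDifferentiable 𝕜 F →ₗ[𝕜] 𝕜 → F where
  toFun u := deriv (deriv u)
  map_add' u v := by
    rw [coe_add, deriv_add_of_differentiable u.2.1 v.2.1,
      deriv_add_of_differentiable u.2.2 v.2.2]
  map_smul' c u := by
    rw [coe_smul, deriv_const_smul_of_differentiable c u.2.1,
      deriv_const_smul_of_differentiable c u.2.2, RingHom.id_apply]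

theorem deriv_deriv_eq_of_hasDerivAt {u u' u'' : 𝕜 → F} (hu : ∀ z, HasDerivAt u (u' z) z)
    (hu' : ∀ z, HasDerivAt u' (u'' z) z) : deriv (deriv u) = u'' := by
  rw [funext fun z => (hu z).deriv]
  exact funext fun z => (hu' z).deriv

theorem mem_twiceDifferentiable_of_hasDerivAt {u u' u'' : 𝕜 → F}
    (hu : ∀ z, HasDerivAt u (u' z) z)
    (hu' : ∀ z, HasDerivAt u' (u'' z) z) : u ∈ twiceDifferentiable 𝕜 F := by
  refine ⟨fun z => (hu z).differentiableAt, ?_⟩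
  rw [funext fun z => (hu z).deriv]
  exact fun z => (hu' z).differentiableAt

end TwiceDifferentiable

noncomputable def airyOp : twiceDifferentiable ℝ ℝ →ₗ[ℝ] ℝ → ℝ where
  toFun u z := -secondDeriv ℝ ℝ u z - z * (u : ℝ → ℝ) z
  map_add' u v := by
    funext z
    simp only [map_add, Pi.add_apply, coe_add]
    ring
  map_smul' c u := by
    funext z
    simp only [map_smul, Pi.smul_apply, coe_smul, smul_eq_mul, RingHom.id_apply]
    ring

theorem airyOp_apply (u : twiceDifferentiable ℝ ℝ) :
    airyOp u = fun z => -deriv (deriv (u : ℝ → ℝ)) z - z * (u : ℝ → ℝ) z := rfl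

def powMul (f : ℝ → ℝ) (ℓ : ℕ) : ℝ → ℝ := fun z => z ^ ℓ * f z

noncomputable def airyDomain (A A' : ℝ → ℝ) (d : ℕ) : Submodule ℝ (twiceDifferentiable ℝ ℝ) :=
  span ℝ ((twiceDifferentiable ℝ ℝ).subtype ⁻¹' (powMul A '' Icc 1 d ∪ powMul A' '' Icc 0 d))

structure IsAiryPair (A A' : ℝ → ℝ) : Prop where
  hasDerivAt : ∀ z, HasDerivAt A (A' z) z
  hasDerivAt_deriv : ∀ z, HasDerivAt A' (-(z * A z)) z

namespace IsAiryPair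

variable {A A' : ℝ → ℝ} (h : IsAiryPair A A')
include h

theorem hasDerivAt_powMul (ℓ : ℕ) (z : ℝ) :
    HasDerivAt (powMul A ℓ) (ℓ * z ^ (ℓ - 1) * A z + z ^ ℓ * A' z) z :=
  (hasDerivAt_pow ℓ z).mul (h.hasDerivAt z)

theorem hasDerivAt_deriv_powMul (ℓ : ℕ) (z : ℝ) :
    HasDerivAt (fun z => ℓ * z ^ (ℓ - 1) * A z + z ^ ℓ * A' z)
      (ℓ * ((ℓ - 1 : ℕ) * z ^ (ℓ - 1 - 1)) * A z + ℓ * z ^ (ℓ - 1) * A' z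
        + (ℓ * z ^ (ℓ - 1) * A' z + z ^ ℓ * -(z * A z))) z :=
  (((hasDerivAt_pow (ℓ - 1) z).const_mul (ℓ : ℝ)).mul (h.hasDerivAt z)).add
    ((hasDerivAt_pow ℓ z).mul (h.hasDerivAt_deriv z))

theorem hasDerivAt_powMul' (ℓ : ℕ) (z : ℝ) :
    HasDerivAt (powMul A' ℓ) (ℓ * z ^ (ℓ - 1) * A' z + z ^ ℓ * -(z * A z)) z :=
  (hasDerivAt_pow ℓ z).mul (h.hasDerivAt_deriv z)

theorem hasDerivAt_deriv_powMul' (ℓ : ℕ) (z : ℝ) :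
    HasDerivAt (fun z => ℓ * z ^ (ℓ - 1) * A' z + z ^ ℓ * -(z * A z))
      (ℓ * ((ℓ - 1 : ℕ) * z ^ (ℓ - 1 - 1)) * A' z + ℓ * z ^ (ℓ - 1) * -(z * A z)
        + (ℓ * z ^ (ℓ - 1) * -(z * A z) + z ^ ℓ * -(1 * A z + z * A' z))) z :=
  (((hasDerivAt_pow (ℓ - 1) z).const_mul (ℓ : ℝ)).mul (h.hasDerivAt_deriv z)).add
    ((hasDerivAt_pow ℓ z).mul ((hasDerivAt_id' z).mul (h.hasDerivAt z)).neg)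

theorem powMul_mem (ℓ : ℕ) : powMul A ℓ ∈ twiceDifferentiable ℝ ℝ :=
  mem_twiceDifferentiable_of_hasDerivAt (h.hasDerivAt_powMul ℓ) (h.hasDerivAt_deriv_powMul ℓ)

theorem powMul_mem' (ℓ : ℕ) : powMul A' ℓ ∈ twiceDifferentiable ℝ ℝ :=
  mem_twiceDifferentiable_of_hasDerivAt (h.hasDerivAt_powMul' ℓ) (h.hasDerivAt_deriv_powMul' ℓ)

/-- For `ℓ < 2` the coefficient of the truncated index `ℓ - 2` vanishes. -/
theorem airyOp_powMul (ℓ : ℕ) {u : twiceDifferentiable ℝ ℝ} (hu : (u : ℝ → ℝ) = powMul A ℓ) :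
    airyOp u = (-((ℓ : ℝ) * (ℓ - 1))) • powMul A (ℓ - 2) - (2 * ℓ : ℝ) • powMul A' (ℓ - 1) := by
  rw [airyOp_apply, hu, deriv_deriv_eq_of_hasDerivAt (h.hasDerivAt_powMul ℓ)
    (h.hasDerivAt_deriv_powMul ℓ)]
  funext z
  simp only [Pi.sub_apply, Pi.smul_apply, smul_eq_mul, powMul]
  rcases ℓ with _ | _ | ℓ <;> simp <;> ring

theorem airyOp_powMul' (ℓ : ℕ) {u : twiceDifferentiable ℝ ℝ} (hu : (u : ℝ → ℝ) = powMul A' ℓ) :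
    airyOp u = (2 * ℓ + 1 : ℝ) • powMul A ℓ - ((ℓ : ℝ) * (ℓ - 1)) • powMul A' (ℓ - 2) := by
  rw [airyOp_apply, hu, deriv_deriv_eq_of_hasDerivAt (h.hasDerivAt_powMul' ℓ)
    (h.hasDerivAt_deriv_powMul' ℓ)]
  funext z
  simp only [Pi.sub_apply, Pi.smul_apply, smul_eq_mul, powMul]
  rcases ℓ with _ | _ | ℓ <;> simp <;> ring

theorem map_airyOp_le (d : ℕ) :
    (airyDomain A A' d).map airyOp ≤ span ℝ (powMul A '' Icc 0 d ∪ powMul A' '' Iio d) := by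
  rw [airyDomain, map_span_le]
  rintro u (⟨ℓ, ⟨hℓ, hℓd⟩, hu⟩ | ⟨ℓ, ⟨-, hℓd⟩, hu⟩)
  · rw [h.airyOp_powMul ℓ hu.symm]
    exact sub_mem
      (smul_mem _ _ (subset_span (.inl (mem_image_of_mem _ ⟨Nat.zero_le _, by omega⟩))))
      (smul_mem _ _ (subset_span (.inr (mem_image_of_mem _ (show ℓ - 1 < d by omega)))))
  · rw [h.airyOp_powMul' ℓ hu.symm]
    refine sub_mem (smul_mem _ _ (subset_span (.inl (mem_image_of_mem _ ⟨Nat.zero_le _, hℓd⟩))))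
      (smul_mem_of_ne_zero_imp _ fun hc => subset_span (.inr (mem_image_of_mem _ ?_)))
    have := two_le_of_mul_sub_one_ne_zero hc
    show ℓ - 2 < d
    omega

theorem powMul_mem_map_airyOp {d ℓ : ℕ} (hℓd : ℓ ≤ d)
    (hprev : 2 ≤ ℓ → powMul A' (ℓ - 2) ∈ (airyDomain A A' d).map airyOp) :
    powMul A ℓ ∈ (airyDomain A A' d).map airyOp := by
  set R := (airyDomain A A' d).map airyOp
  let u : twiceDifferentiable ℝ ℝ := ⟨powMul A' ℓ, h.powMul_mem' ℓ⟩
  have hu : airyOp u ∈ R :=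
    mem_map_of_mem (subset_span (.inr (mem_image_of_mem _ ⟨Nat.zero_le _, hℓd⟩)))
  have hsum : (2 * ℓ + 1 : ℝ) • powMul A ℓ
      = airyOp u + ((ℓ : ℝ) * (ℓ - 1)) • powMul A' (ℓ - 2) := by
    rw [h.airyOp_powMul' ℓ rfl]
    abel
  refine (R.smul_mem_iff (by positivity : (2 * ℓ + 1 : ℝ) ≠ 0)).mp ?_
  rw [hsum]
  exact add_mem hu (smul_mem_of_ne_zero_imp _ fun hc => hprev (two_le_of_mul_sub_one_ne_zero hc))

theorem powMul_mem_map_airyOp' {d ℓ : ℕ} (hℓd : ℓ < d)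
    (hprev : 1 ≤ ℓ → powMul A (ℓ - 1) ∈ (airyDomain A A' d).map airyOp) :
    powMul A' ℓ ∈ (airyDomain A A' d).map airyOp := by
  set R := (airyDomain A A' d).map airyOp
  let u : twiceDifferentiable ℝ ℝ := ⟨powMul A (ℓ + 1), h.powMul_mem (ℓ + 1)⟩
  have hu : airyOp u ∈ R :=
    mem_map_of_mem (subset_span (.inl (mem_image_of_mem _ ⟨by omega, by omega⟩)))
  have hsum : (2 * (ℓ + 1 : ℕ) : ℝ) • powMul A' ℓ
      = (-(((ℓ + 1 : ℕ) : ℝ) * ((ℓ + 1 : ℕ) - 1))) • powMul A (ℓ - 1) - airyOp u := by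
    rw [h.airyOp_powMul (ℓ + 1) rfl]
    simp only [Nat.add_sub_cancel, show ℓ + 1 - 2 = ℓ - 1 by omega]
    abel
  refine (R.smul_mem_iff (by positivity : (2 * (ℓ + 1 : ℕ) : ℝ) ≠ 0)).mp ?_
  rw [hsum]
  refine sub_mem (smul_mem_of_ne_zero_imp _ fun hc => hprev ?_) hu
  have := two_le_of_mul_sub_one_ne_zero (neg_ne_zero.mp hc)
  omega

theorem le_map_airyOp (d : ℕ) :
    span ℝ (powMul A '' Icc 0 d ∪ powMul A' '' Iio d) ≤ (airyDomain A A' d).map airyOp := by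
  have key : ∀ ℓ, (ℓ ≤ d → powMul A ℓ ∈ (airyDomain A A' d).map airyOp)
      ∧ (ℓ < d → powMul A' ℓ ∈ (airyDomain A A' d).map airyOp) := by
    intro ℓ
    induction ℓ using Nat.strong_induction_on with
    | _ ℓ ih =>
      exact ⟨fun hℓd => h.powMul_mem_map_airyOp hℓd fun hℓ => (ih (ℓ - 2) (by omega)).2 (by omega),
        fun hℓd => h.powMul_mem_map_airyOp' hℓd fun hℓ => (ih (ℓ - 1) (by omega)).1 (by omega)⟩
  rw [span_le]
  rintro _ (⟨ℓ, ⟨-, hℓ⟩, rfl⟩ | ⟨ℓ, hℓ, rfl⟩)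
  exacts [(key ℓ).1 hℓ, (key ℓ).2 hℓ]

end IsAiryPair

/-- With `A` the flipped Airy function (`A'' = −z A`), `α_ℓ(z) = z^ℓ A(z)`,
`β_ℓ(z) = z^ℓ A'(z)`, and `A_d = {α_ℓ, β_ℓ : ℓ ≤ d}` a linearly independent family,
the operator `u ↦ −u'' − z u` is a bijection from `span(A_d \ {α₀})`
onto `span(A_d \ {β_d})`. -/
theorem stmt9 (A A' : ℝ → ℝ)
    (hA : ∀ z, HasDerivAt A (A' z) z)
    (hA' : ∀ z, HasDerivAt A' (-(z * A z)) z)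
    (d : ℕ) (α β : ℕ → ℝ → ℝ)
    (hα : α = fun ℓ => fun z : ℝ => z ^ ℓ * A z)
    (hβ : β = fun ℓ => fun z : ℝ => z ^ ℓ * A' z)
    (hLI : LinearIndependent ℝ
      (Sum.elim (fun i : Fin (d + 1) => α i) (fun i : Fin (d + 1) => β i))) :
    Set.BijOn (fun u : ℝ → ℝ => fun z => -deriv (deriv u) z - z * u z)
      (Submodule.span ℝ (α '' Set.Icc 1 d ∪ β '' Set.Icc 0 d) : Set (ℝ → ℝ))
      (Submodule.span ℝ (α '' Set.Icc 0 d ∪ β '' Set.Iio d) : Set (ℝ → ℝ)) := by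
  obtain rfl : α = powMul A := hα
  obtain rfl : β = powMul A' := hβ
  have h : IsAiryPair A A' := ⟨hA, hA'⟩
  have hS : powMul A '' Icc 1 d ∪ powMul A' '' Icc 0 d ⊆ twiceDifferentiable ℝ ℝ :=
    union_subset (image_subset_iff.2 fun ℓ _ => h.powMul_mem ℓ)
      (image_subset_iff.2 fun ℓ _ => h.powMul_mem' ℓ)
  have hV := map_subtype_span_preimage _ hS
  have : FiniteDimensional ℝ (airyDomain A A' d) := FiniteDimensional.span_of_finite ℝ
    ((((finite_Icc 1 d).image _).union ((finite_Icc 0 d).image _)).preimage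
      (twiceDifferentiable ℝ ℝ).injective_subtype.injOn)
  have hbij := airyOp.bijOn_of_map_eq_of_finrank_le
    (le_antisymm (h.map_airyOp_le d) (h.le_map_airyOp d))
    (by rw [← finrank_map_subtype_eq, airyDomain, hV,
          finrank_span_image_Icc_union_image_Iio _ _ d hLI]
        exact finrank_span_image_Icc_union_image_Icc_le _ _ d)
  rw [← hV, map_coe]
  exact (bijOn_comp_iff (twiceDifferentiable ℝ ℝ).injective_subtype.injOn).mp hbij
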